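/- Let G be a locally compact group with Haar measure, U a compact subgroup, and β a symmetric bi-U-invariant finite Borel measure on G. Let τ be an irreducible unitary representation of G on a Hilbert space ℋ whose subspace ℋ^U of U-invariant vectors is at most one-dimensional. Then the operator norm of τ(β) equals 0 if ℋ^U = 0, and equals |β(η_τ)| where η_τ(g) = ⟨τ(g)w, w⟩ for a unit vector w ∈ ℋ^U otherwise. -/

import Mathlib

/-!
Left `U`-invariance of `β` makes every `τ(β) v` a `U`-invariant vector, and symmetry of `β`
together with unitarity of `τ` makes `τ(β)` self-adjoint. If `ℋ^U = ℂ w` with `‖w‖ = 1`, then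
`τ(β) v = ⟪w, τ(β) v⟫ w = conj c ⟪w, v⟫ w` with `c = ⟪w, τ(β) w⟫`, so `‖τ(β)‖ = |c|`, and
`⟪τ(β) w, w⟫ = β(η_τ)`. Both changes of variables are along measurable equivalences, so they
need no integrability of the matrix coefficients.
-/

open MeasureTheory

section Unitary

variable {G 𝕜 H : Type*} [Group G] [RCLike 𝕜] [NormedAddCommGroup H] [InnerProductSpace 𝕜 H]
  {τ : G →* (H →L[𝕜] H)}

theorem inner_map_apply_eq_inner_map_inv_apply
    (hunitary : ∀ (g : G) (w v : H), (inner 𝕜 (τ g w) (τ g v) : 𝕜) = inner 𝕜 w v)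
    (g : G) (v x : H) : (inner 𝕜 (τ g v) x : 𝕜) = inner 𝕜 v (τ g⁻¹ x) := by
  conv_lhs => rw [← hunitary g⁻¹, ← mul_apply_eq_comp, ← map_mul, inv_mul_cancel, map_one,
    one_apply_eq_self]

variable [MeasurableSpace G] {β : Measure G} {T : H →L[𝕜] H}

theorem isSymmetric_of_map_inv_eq [MeasurableInv G]
    (hunitary : ∀ (g : G) (w v : H), (inner 𝕜 (τ g w) (τ g v) : 𝕜) = inner 𝕜 w v)
    (hsymm : Measure.map (fun g => g⁻¹) β = β)
    (hT : ∀ w v : H, (inner 𝕜 (T w) v : 𝕜) = ∫ g, (inner 𝕜 (τ g w) v : 𝕜) ∂β) :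
    (T : H →ₗ[𝕜] H).IsSymmetric := by
  have hinv : MeasurePreserving (MeasurableEquiv.inv G) β β := ⟨measurable_inv, hsymm⟩
  intro v x
  calc (inner 𝕜 (T v) x : 𝕜) = ∫ g, (inner 𝕜 (τ g⁻¹ v) x : 𝕜) ∂β := by
        rw [hT]; exact (hinv.integral_comp' fun g => inner 𝕜 (τ g v) x).symm
    _ = ∫ g, starRingEnd 𝕜 (inner 𝕜 (τ g x) v) ∂β := by
        simp only [inner_map_apply_eq_inner_map_inv_apply hunitary, inv_inv, inner_conj_symm]
    _ = inner 𝕜 v (T x) := by rw [integral_conj, ← hT, inner_conj_symm]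

theorem apply_eq_self_of_map_mul_left_eq [MeasurableMul G] {u : G}
    (hunitary : ∀ (g : G) (w v : H), (inner 𝕜 (τ g w) (τ g v) : 𝕜) = inner 𝕜 w v)
    (hleft : Measure.map (fun g => u * g) β = β)
    (hT : ∀ w v : H, (inner 𝕜 (T w) v : 𝕜) = ∫ g, (inner 𝕜 (τ g w) v : 𝕜) ∂β) (v : H) :
    τ u (T v) = T v := by
  have hmul : MeasurePreserving (MeasurableEquiv.mulLeft u) β β := ⟨measurable_const_mul u, hleft⟩
  refine ext_inner_right 𝕜 fun x => ?_
  calc (inner 𝕜 (τ u (T v)) x : 𝕜) = ∫ g, (inner 𝕜 (τ (u * g) v) x : 𝕜) ∂β := by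
        simp only [inner_map_apply_eq_inner_map_inv_apply hunitary u, hT, map_mul,
          mul_apply_eq_comp]
    _ = inner 𝕜 (T v) x := by rw [hT]; exact hmul.integral_comp' fun g => inner 𝕜 (τ g v) x

end Unitary

theorem exists_eq_smul_of_exists_smul {K V : Type*} [Field K] [AddCommGroup V] [Module K V]
    {w x : V} (hw : w ≠ 0) (h : ∃ c : K, x = c • w ∨ w = c • x) : ∃ c : K, x = c • w := by
  obtain ⟨c, hx | hw'⟩ := h
  · exact ⟨c, hx⟩
  · have hc : c ≠ 0 := by rintro rfl; exact hw (by simpa using hw')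
    exact ⟨c⁻¹, by rw [hw', smul_smul, inv_mul_cancel₀ hc, one_smul]⟩

theorem ContinuousLinearMap.norm_eq_norm_inner_of_isSymmetric_of_forall_exists_eq_smul
    {𝕜 H : Type*} [RCLike 𝕜] [NormedAddCommGroup H] [InnerProductSpace 𝕜 H] {T : H →L[𝕜] H}
    (hT : (T : H →ₗ[𝕜] H).IsSymmetric) {w : H} (hw : ‖w‖ = 1)
    (hrange : ∀ v, ∃ c : 𝕜, T v = c • w) : ‖T‖ = ‖(inner 𝕜 (T w) w : 𝕜)‖ := by
  have hww : (inner 𝕜 w w : 𝕜) = 1 := by simp [inner_self_eq_norm_sq_to_K, hw]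
  have hproj : ∀ v, T v = (inner 𝕜 w (T v) : 𝕜) • w := fun v => by
    obtain ⟨c, hc⟩ := hrange v
    rw [hc, inner_smul_right, hww, mul_one]
  set c : 𝕜 := inner 𝕜 w (T w)
  have hbound : ∀ v, ‖T v‖ ≤ ‖c‖ * ‖v‖ := fun v => by
    rw [hproj v, norm_smul, hw, mul_one, ← T.coe_coe, ← hT, T.coe_coe, hproj w,
      inner_smul_left, norm_mul, RCLike.norm_conj]
    exact mul_le_mul_of_nonneg_left (by simpa [hw] using norm_inner_le_norm w v) (norm_nonneg c)
  rw [norm_inner_symm]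
  refine le_antisymm (T.opNorm_le_bound (norm_nonneg c) hbound) ?_
  calc ‖c‖ = ‖T w‖ := by rw [hproj w, norm_smul, hw, mul_one]
    _ ≤ ‖T‖ := by simpa [hw] using T.le_opNorm w

theorem stmt_1_general {G : Type*} [Group G] [TopologicalSpace G] [IsTopologicalGroup G]
    [MeasurableSpace G] [BorelSpace G]
    {H : Type*} [NormedAddCommGroup H] [InnerProductSpace ℂ H]
    (U : Subgroup G)
    (β : Measure G)
    (hsymm : Measure.map (fun g => g⁻¹) β = β)
    (hleft : ∀ u ∈ U, Measure.map (fun g => u * g) β = β)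
    (τ : G →* (H →L[ℂ] H))
    (hunitary : ∀ (g : G) (w v : H), (inner ℂ (τ g w) (τ g v) : ℂ) = inner ℂ w v)
    (hmult1 : ∀ w w' : H, (∀ u ∈ U, τ u w = w) → (∀ u ∈ U, τ u w' = w') →
      ∃ c : ℂ, w' = c • w ∨ w = c • w')
    (T : H →L[ℂ] H)
    (hT : ∀ w v : H, (inner ℂ (T w) v : ℂ) = ∫ g, (inner ℂ (τ g w) v : ℂ) ∂β) :
    ((∀ w : H, (∀ u ∈ U, τ u w = w) → w = 0) → ‖T‖ = 0) ∧
    (∀ w : H, (∀ u ∈ U, τ u w = w) → ‖w‖ = 1 →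
      ‖T‖ = ‖∫ g, (inner ℂ (τ g w) w : ℂ) ∂β‖) := by
  have hinvariant : ∀ v, ∀ u ∈ U, τ u (T v) = T v := fun v u hu =>
    apply_eq_self_of_map_mul_left_eq hunitary (hleft u hu) hT v
  refine ⟨fun hzero => ?_, fun w hw hw1 => ?_⟩
  · rw [show T = 0 from ContinuousLinearMap.ext fun v => hzero _ (hinvariant v), norm_zero]
  · have hw0 : w ≠ 0 := by rintro rfl; simp at hw1
    rw [← hT, T.norm_eq_norm_inner_of_isSymmetric_of_forall_exists_eq_smul
      (isSymmetric_of_map_inv_eq hunitary hsymm hT) hw1]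
    exact fun v => exists_eq_smul_of_exists_smul hw0 (hmult1 w (T v) hw (hinvariant v))

/-- Operator norm of `τ(β)` for a symmetric bi-`U`-invariant finite measure `β` and an
irreducible unitary representation `τ` with at most one-dimensional space of
`U`-invariant vectors: it is `0` if there are no nonzero `U`-invariant vectors, and
equals `|β(η_τ)|` otherwise, where `η_τ` is the spherical matrix coefficient. -/
theorem stmt_1 {G : Type*} [Group G] [TopologicalSpace G] [IsTopologicalGroup G]
    [MeasurableSpace G] [BorelSpace G]
    {H : Type*} [NormedAddCommGroup H] [InnerProductSpace ℂ H] [CompleteSpace H]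
    (U : Subgroup G) (hU : IsCompact (U : Set G))
    (β : Measure G) [IsFiniteMeasure β]
    (hsymm : Measure.map (fun g => g⁻¹) β = β)
    (hleft : ∀ u ∈ U, Measure.map (fun g => u * g) β = β)
    (hright : ∀ u ∈ U, Measure.map (fun g => g * u) β = β)
    (τ : G →* (H →L[ℂ] H))
    (hunitary : ∀ (g : G) (w v : H), (inner ℂ (τ g w) (τ g v) : ℂ) = inner ℂ w v)
    (hcont : ∀ w v : H, Continuous fun g => (inner ℂ (τ g w) v : ℂ))
    (hirred : ∀ K : Submodule ℂ H, IsClosed (K : Set H) →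
      (∀ g : G, ∀ x ∈ K, τ g x ∈ K) → K = ⊥ ∨ K = ⊤)
    (hmult1 : ∀ w w' : H, (∀ u ∈ U, τ u w = w) → (∀ u ∈ U, τ u w' = w') →
      ∃ c : ℂ, w' = c • w ∨ w = c • w')
    (T : H →L[ℂ] H)
    (hT : ∀ w v : H, (inner ℂ (T w) v : ℂ) = ∫ g, (inner ℂ (τ g w) v : ℂ) ∂β) :
    ((∀ w : H, (∀ u ∈ U, τ u w = w) → w = 0) → ‖T‖ = 0) ∧
    (∀ w : H, (∀ u ∈ U, τ u w = w) → ‖w‖ = 1 →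
      ‖T‖ = ‖∫ g, (inner ℂ (τ g w) w : ℂ) ∂β‖) :=
  stmt_1_general U β hsymm hleft τ hunitary hmult1 T hT
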